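/- arXiv:2102.09787 — 4 statements merged into one kernel-verified Lean document; each statement's English description precedes it below -/
import Mathlib

section
/- For a connected n-configuration C_n, the j-contraction of its set of j-presources is a connected (n-1)-configuration. That is, contr_j(C_n^{j-so}) = { dx^i_{k_i} \ j : dx^i_{k_i} ∈ C_n^{j-so} } is connected, where C_n^{j-so} consists of, for each j-partition of C_n, the coordinate with minimal depth in direction j. -/
/-- A coordinate of the `n`-dimensional network `Z_n`. -/
abbrev Coord (n : ℕ) := Fin n → ℤ

/-- One step of a zigzag of contractions inside a configuration `C`. -/
def ConfigStep {n : ℕ} (C : Set (Coord (n + 1))) (x y : Coord (n + 1)) : Prop :=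
  x ∈ C ∧ y ∈ C ∧ ∃ j : Fin (n + 1), j.removeNth x = j.removeNth y

/-- A configuration is connected when any two of its coordinates are joined by a
zigzag of contractions. -/
def IsConnectedConfig {n : ℕ} (C : Set (Coord (n + 1))) : Prop :=
  ∀ x ∈ C, ∀ y ∈ C, Relation.ReflTransGen (ConfigStep C) x y

/-- The `j`-presources of a configuration `C`: from each `j`-partition
(the class of coordinates of `C` agreeing in all directions except `j`)
we select the coordinate of minimal depth in the direction `j`. -/
def jPresources {n : ℕ} (j : Fin (n + 2)) (C : Set (Coord (n + 2))) :
    Set (Coord (n + 2)) :=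
  {x | x ∈ C ∧ ∀ y ∈ C, (∀ i, i ≠ j → y i = x i) → x j ≤ y j}

lemma apply_eq_of_removeNth_eq {n : ℕ} {i : Fin (n + 1)} {b c : Coord (n + 1)}
    (h : i.removeNth b = i.removeNth c) : ∀ t, t ≠ i → b t = c t := by
  intro t ht
  obtain ⟨s, rfl⟩ : ∃ s, i.succAbove s = t := by
    have : t ∈ Set.range i.succAbove := by
      rw [Fin.range_succAbove]; simpa using ht
    exact this
  exact congrFun h s

/-- For a connected configuration `C`, the `j`-contraction of its set of
`j`-presources is a connected configuration of one dimension lower. -/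
theorem presources_contraction_connected {n : ℕ} (C : Set (Coord (n + 2)))
    (hfin : C.Finite) (hconn : IsConnectedConfig C) (j : Fin (n + 2)) :
    IsConnectedConfig ((fun x => j.removeNth x) '' jPresources j C) := by
  classical
  have himg : (fun x => j.removeNth x) '' jPresources j C
      = (fun x => j.removeNth x) '' C := by
    apply Set.Subset.antisymm
    · exact Set.image_mono (fun x hx => hx.1)
    · rintro _ ⟨x, hx, rfl⟩
      obtain ⟨z, hz, hmin⟩ := Set.exists_min_image
        {y | y ∈ C ∧ ∀ i, i ≠ j → y i = x i} (fun y => y j)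
        (hfin.subset (fun y hy => hy.1)) ⟨x, hx, fun _ _ => rfl⟩
      refine ⟨z, ⟨hz.1, fun y hy hagree =>
        hmin y ⟨hy, fun i hi => (hagree i hi).trans (hz.2 i hi)⟩⟩, ?_⟩
      funext k
      exact hz.2 _ (Fin.succAbove_ne j k)
  rw [himg]
  rintro _ ⟨x, hx, rfl⟩ _ ⟨y, hy, rfl⟩
  have h := hconn x hx y hy
  induction h with
  | refl => exact .refl
  | tail _ hbc ih =>
    obtain ⟨hb, hc, i, heq⟩ := hbc
    by_cases hij : i = j
    · subst hij
      simpa only [heq] using ih hb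
    · obtain ⟨k, rfl⟩ : ∃ k, j.succAbove k = i := by
        have : i ∈ Set.range j.succAbove := by
          rw [Fin.range_succAbove]; simpa using hij
        exact this
      refine (ih hb).tail ⟨⟨_, hb, rfl⟩, ⟨_, hc, rfl⟩, k, ?_⟩
      funext m
      exact apply_eq_of_removeNth_eq heq _
        (fun hcontra => Fin.succAbove_ne k m (j.succAbove_right_injective hcontra))
end

section
/- For a connected n-configuration C_n, the j-contraction of its j-predomain is a connected (n-1)-configuration: contr_j(C_n^{j-dom}) is connected, where C_n^{j-dom} consists of those coordinates dx^1_{k_1} ⊗ ⋯ ⊗ dx^j_{k_j} ⊗ ⋯ ⊗ dx^n_{k_n} ∈ C_n such that the coordinate with j-th index k_j − 1 (and the other indices unchanged) does not belong to C_n. -/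
/-- The `j`-predomain of a configuration `C`: the coordinates `x ∈ C` such that the
coordinate obtained from `x` by decreasing the `j`-th index by `1` does not belong
to `C`. -/
def jPredomain {n : ℕ} (j : Fin (n + 2)) (C : Set (Coord (n + 2))) :
    Set (Coord (n + 2)) :=
  {x | x ∈ C ∧ Function.update x j (x j - 1) ∉ C}


theorem Fin.exists_removeNth_removeNth_eq_of_ne {n : ℕ} {α : Type*} {x y : Fin (n + 2) → α}
    {i j : Fin (n + 2)} (hij : i ≠ j) (h : i.removeNth x = i.removeNth y) :
    ∃ k : Fin (n + 1), k.removeNth (j.removeNth x) = k.removeNth (j.removeNth y) := by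
  obtain ⟨k, rfl⟩ := Fin.exists_succAbove_eq hij
  exact ⟨k, by rw [Fin.removeNth_removeNth_eq_swap, h, ← Fin.removeNth_removeNth_eq_swap]⟩

section Contraction

variable {n : ℕ} {C : Set (Coord (n + 2))}

theorem ConfigStep.reflTransGen_image_removeNth (j : Fin (n + 2)) {x y : Coord (n + 2)}
    (hxy : ConfigStep C x y) :
    Relation.ReflTransGen (ConfigStep (j.removeNth '' C)) (j.removeNth x) (j.removeNth y) := by
  obtain ⟨hx, hy, i, hi⟩ := hxy
  by_cases hij : i = j
  · subst hij
    rw [hi]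
  · exact .single ⟨Set.mem_image_of_mem _ hx, Set.mem_image_of_mem _ hy,
      Fin.exists_removeNth_removeNth_eq_of_ne hij hi⟩

theorem IsConnectedConfig.image_removeNth (hC : IsConnectedConfig C) (j : Fin (n + 2)) :
    IsConnectedConfig (j.removeNth '' C) := by
  rintro _ ⟨x, hx, rfl⟩ _ ⟨y, hy, rfl⟩
  exact Relation.ReflTransGen.lift' j.removeNth
    (fun _ _ h ↦ h.reflTransGen_image_removeNth j) _ _ (hC x hx y hy)

end Contraction

theorem exists_mem_jPredomain_removeNth_eq {n : ℕ} {C : Set (Coord (n + 2))} (hfin : C.Finite)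
    (j : Fin (n + 2)) {x : Coord (n + 2)} (hx : x ∈ C) :
    ∃ y ∈ jPredomain j C, j.removeNth y = j.removeNth x := by
  set line : Set ℤ := {m | Function.update x j m ∈ C}
  have hline : line.Finite := hfin.preimage (Function.update_injective x j).injOn
  obtain ⟨m, hm, hmin⟩ := Set.exists_min_image line id hline ⟨x j, by simpa [line] using hx⟩
  refine ⟨Function.update x j m, ⟨hm, fun hm' ↦ ?_⟩, Fin.removeNth_update j m x⟩
  rw [Function.update_self, Function.update_idem] at hm'
  have : m ≤ m - 1 := hmin (m - 1) hm'
  omega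

theorem image_removeNth_jPredomain {n : ℕ} {C : Set (Coord (n + 2))} (hfin : C.Finite)
    (j : Fin (n + 2)) : j.removeNth '' jPredomain j C = j.removeNth '' C := by
  refine (Set.image_mono fun _ hx ↦ hx.1).antisymm ?_
  rintro _ ⟨x, hx, rfl⟩
  exact exists_mem_jPredomain_removeNth_eq hfin j hx

/-- For a connected configuration `C`, the `j`-contraction of its `j`-predomain is a
connected configuration of one dimension lower. -/
theorem predomain_contraction_connected {n : ℕ} (C : Set (Coord (n + 2)))
    (hfin : C.Finite) (hconn : IsConnectedConfig C) (j : Fin (n + 2)) :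
    IsConnectedConfig ((fun x => j.removeNth x) '' jPredomain j C) := by
  rw [image_removeNth_jPredomain hfin j]
  exact hconn.image_removeNth j
end

section
/- The unit i : Id → R of the monad of cubical reflexive sets with connections is a cartesian natural transformation: for every cubical set C, the square with top C → 1, left i(C) : C → R(C), bottom R(!) : R(C) → R(1), right i(1) : 1 → R(1) is a pullback in the category of cubical sets. -/
/-- A cubical set (presheaf on the pre-cubical site, presented by its cells and
face maps subject to the cubical identities). -/
structure PreCubicalSet where
  cell : ℕ → Type
  face : ∀ {n : ℕ}, Bool → Fin (n + 1) → cell (n + 1) → cell n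
  face_face : ∀ {n : ℕ} (α β : Bool) (i k : Fin (n + 1)), i ≤ k →
    ∀ x : cell (n + 2),
      face α i (face β k.succ x) = face β k (face α i.castSucc x)

/-- A formal string or zigzag of degeneracy (`ε_j`) and connection (`Γ^γ_j`)
operations raising dimension `p` to dimension `n`.  It is empty iff `p = n`. -/
inductive DegString : ℕ → ℕ → Type
  | nil {p : ℕ} : DegString p p
  | degen {p q : ℕ} (j : Fin (q + 1)) (z : DegString p q) : DegString p (q + 1)
  | conn {p q : ℕ} (γ : Bool) (j : Fin (q + 1)) (z : DegString p (q + 1)) :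
      DegString p (q + 2)

/-- An `n`-cell of `R(C)`: a pair of a string/zigzag of degeneracies `z` of size
`n - p` together with a `p`-cell of `C` (the string is empty iff `p = n`). -/
def RCell (cell : ℕ → Type) (n : ℕ) : Type := (p : ℕ) × DegString p n × cell p

/-- The unit `i : C → R(C)` of the monad of reflexive cubical sets with
connections: a cell is sent to itself, with empty degeneracy string. -/
def runit (cell : ℕ → Type) (n : ℕ) (c : cell n) : RCell cell n := ⟨n, .nil, c⟩

/-- The action of the endofunctor `R` on (levelwise) maps of cells. -/
def rmap {C D : ℕ → Type} (f : ∀ p, C p → D p) (n : ℕ) :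
    RCell C n → RCell D n :=
  fun x => ⟨x.1, x.2.1, f x.1 x.2.2⟩

/-- The terminal cubical set has a unique cell `1(n)` in each dimension. -/
def OneCell : ℕ → Type := fun _ => PUnit

/-! A cell of `R(C)` lies over a non-degenerate cell `(∅, d)` of `R(D)` exactly when its own
degeneracy string is empty, since `R(f)` leaves strings untouched. Hence every naturality square
of the unit is a levelwise pullback, and the theorem is the case `D = 1`. -/

open CategoryTheory

theorem runit_injective (cell : ℕ → Type) (n : ℕ) : Function.Injective (runit cell n) := by
  intro c c' h
  injection h with _ h
  exact (Prod.mk.inj h).2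

theorem rmap_eq_runit_iff {C D : ℕ → Type} (f : ∀ p, C p → D p) (n : ℕ) (x : RCell C n)
    (d : D n) : rmap f n x = runit D n d ↔ ∃ c, f n c = d ∧ runit C n c = x := by
  constructor
  · obtain ⟨p, z, c⟩ := x
    intro h
    simp only [rmap, runit] at h
    injection h with hp h
    subst hp
    obtain ⟨rfl, rfl⟩ := Prod.mk.inj (eq_of_heq h)
    exact ⟨c, rfl, rfl⟩
  · rintro ⟨c, rfl, rfl⟩
    rfl

theorem runit_isPullback {C D : ℕ → Type} (f : ∀ p, C p → D p) (n : ℕ) :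
    IsPullback (C := Type) (TypeCat.ofHom (f n)) (TypeCat.ofHom (runit C n))
      (TypeCat.ofHom (runit D n)) (TypeCat.ofHom (rmap f n)) := by
  rw [Limits.Types.isPullback_iff]
  exact ⟨rfl, fun _ _ ⟨_, h⟩ => runit_injective C n h,
    fun d x h => (rmap_eq_runit_iff f n x d).mp h.symm⟩

/-- The unit `i : Id → R` of the monad of cubical reflexive sets with connections is
a cartesian natural transformation: for every cubical set `C` the square with top
`C → 1`, left `i(C) : C → R(C)`, right `i(1) : 1 → R(1)` and bottom
`R(!) : R(C) → R(1)` is a pullback (of cubical sets, i.e. a levelwise pullback in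
every dimension `n`). -/
theorem runit_cartesian (C : PreCubicalSet) (n : ℕ) :
    @CategoryTheory.IsPullback Type _ (C.cell n) PUnit (RCell C.cell n)
      (RCell OneCell n)
      (TypeCat.ofHom (fun _ => PUnit.unit))
      (TypeCat.ofHom (runit C.cell n))
      (TypeCat.ofHom (runit OneCell n))
      (TypeCat.ofHom (rmap (fun _ _ => PUnit.unit) n)) :=
  runit_isPullback (D := OneCell) (fun _ _ => PUnit.unit) n
end

section
/- The multiplication m : R² → R of the monad of cubical reflexive sets with connections is a cartesian natural transformation: for every cubical set C, the square R²(C) → R²(1), R²(C) → R(C) (via m(C)), R(C) → R(1) (via R(!)), R²(1) → R(1) (via m(1)) is a pullback. -/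
/-- Concatenation of strings/zigzags of degeneracies. -/
def DegString.concat {p : ℕ} : ∀ {q n : ℕ}, DegString q n → DegString p q → DegString p n
  | _, _, .nil, w => w
  | _, _, .degen j z, w => .degen j (z.concat w)
  | _, _, .conn γ j z, w => .conn γ j (z.concat w)

/-- The multiplication `m : R² → R`, given by concatenation of strings/zigzags of
degeneracies: `m (z (z' (c))) = (z + z') (c)`. -/
def rmult (cell : ℕ → Type) (n : ℕ) :
    RCell (RCell cell) n → RCell cell n :=
  fun x => ⟨x.2.2.1, x.2.1.concat x.2.2.2.1, x.2.2.2.2⟩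

/-! An `n`-cell `z(z'(c))` of `R²(C)` is recovered from its image `z(z'(f c))` in `R²(D)`,
which fixes the zigzags `z` and `z'`, together with its image `(z + z')(c)` under `m`, which
fixes `c`; and any compatible pair `z(z'(f c))`, `(z + z')(c)` comes from `z(z'(c))`. So every
naturality square of `m` is a pullback, in particular the one for `! : C → 1`. -/

open CategoryTheory

section

variable {C D : ℕ → Type} (f : ∀ p, C p → D p) {n : ℕ}

theorem eq_of_rmap_eq_of_rmult_eq {x y : RCell (RCell C) n}
    (htop : rmap (fun p => rmap f p) n x = rmap (fun p => rmap f p) n y)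
    (hleft : rmult C n x = rmult C n y) : x = y := by
  obtain ⟨p, z, q, z', c⟩ := x
  obtain ⟨p₂, z₂, q₂, z₂', c₂⟩ := y
  -- `f` need not be injective, so only the underlying zigzags of `htop` can be matched.
  have hshape := congrArg (rmap (fun p => rmap (fun _ _ => PUnit.unit) p) n) htop
  cases hshape
  cases hleft
  rfl

theorem exists_rmap_eq_and_rmult_eq {y : RCell (RCell D) n} {x : RCell C n}
    (h : rmult D n y = rmap f n x) :
    ∃ w, rmap (fun p => rmap f p) n w = y ∧ rmult C n w = x := by
  obtain ⟨p, z, q, z', d⟩ := y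
  obtain ⟨q₂, w, c⟩ := x
  dsimp only [rmap, rmult] at h
  cases h
  exact ⟨⟨p, z, q, z', c⟩, rfl, rfl⟩

theorem isPullback_rmap_rmult :
    IsPullback (TypeCat.ofHom (rmap (fun p => rmap f p) n)) (TypeCat.ofHom (rmult C n))
      (TypeCat.ofHom (rmult D n)) (TypeCat.ofHom (rmap f n)) :=
  (Limits.Types.isPullback_iff _ _ _ _).2
    ⟨rfl, fun _ _ h => eq_of_rmap_eq_of_rmult_eq f h.1 h.2,
      fun _ _ h => exists_rmap_eq_and_rmult_eq f h⟩

end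

/-- The multiplication `m : R² → R` of the monad of cubical reflexive sets with
connections is a cartesian natural transformation: for every cubical set `C` the
square with top `R²(!) : R²(C) → R²(1)`, left `m(C)`, right `m(1)` and bottom
`R(!) : R(C) → R(1)` is a pullback (of cubical sets, i.e. a levelwise pullback in
every dimension `n`). -/
theorem rmult_cartesian (C : PreCubicalSet) (n : ℕ) :
    @CategoryTheory.IsPullback Type _
      (RCell (RCell C.cell) n) (RCell (RCell OneCell) n)
      (RCell C.cell n) (RCell OneCell n)
      (TypeCat.ofHom (rmap (fun p => rmap (fun q (_ : C.cell q) => PUnit.unit) p) n))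
      (TypeCat.ofHom (rmult C.cell n))
      (TypeCat.ofHom (rmult OneCell n))
      (TypeCat.ofHom (rmap (fun _ _ => PUnit.unit) n)) :=
  isPullback_rmap_rmult _
end
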